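/- arXiv:2011.12240 — 2 statements merged into one kernel-verified Lean document; each statement's English description precedes it below -/
import Mathlib

section
/- Let r be a negative odd integer, c = r/2 + 1/2, and d ∈ (1/6)ℤ. Suppose there exists α > 0 with −α²·r + 2d − r/4 − 1/2 = 0 (so d < r/8 + 1/4), and suppose the Bogomolov-type inequality −2dr + r²/4 + r/2 + 1/4 ≥ 0 holds (so d ≥ r/8 + 1/(8r) + 1/4). Then r ∈ {−1, −3}. -/
/-- Arithmetic lemma in the wall classification for torsion classes ch_{≤2} = (0, H, H²/2):
let r be a negative odd integer and d ∈ (1/6)ℤ. If there exists α > 0 with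
−α²r + 2d − r/4 − 1/2 = 0, and −2dr + r²/4 + r/2 + 1/4 ≥ 0 (Bogomolov), then
r ∈ {−1, −3}. -/
theorem stmt_5 (r : ℤ) (hneg : r < 0) (hodd : Odd r) (d : ℝ)
    (hd : ∃ k : ℤ, d = (k : ℝ) / 6)
    (hwall : ∃ α : ℝ, 0 < α ∧ -α ^ 2 * (r : ℝ) + 2 * d - (r : ℝ) / 4 - 1/2 = 0)
    (hbog : -2 * d * (r : ℝ) + (r : ℝ) ^ 2 / 4 + (r : ℝ) / 2 + 1/4 ≥ 0) :
    r = -1 ∨ r = -3 := by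
  obtain ⟨k, rfl⟩ := hd
  obtain ⟨α, hα, heq⟩ := hwall
  have hr : (r : ℝ) < 0 := by exact_mod_cast hneg
  have h1 : (4 * k : ℝ) - 3 * r - 6 < 0 := by
    nlinarith [mul_pos (mul_pos hα hα) (neg_pos.mpr hr)]
  have h2 : (r : ℝ) * (4 * k - 3 * r - 6) ≤ 3 := by nlinarith
  have h1' : 4 * k - 3 * r - 6 < 0 := by exact_mod_cast h1
  have h2' : r * (4 * k - 3 * r - 6) ≤ 3 := by exact_mod_cast h2
  have hm : 4 * k - 3 * r - 6 ≤ -1 := by omega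
  have hr3 : -r ≤ 3 := by nlinarith
  obtain ⟨j, hj⟩ := hodd
  omega
end

section
/- Let r ≥ 2 be an integer, x = 1, and y ∈ (1/6)ℤ. Suppose there exists α > 0 satisfying the wall equation ν_{α,−1}(r, H, yH²) = ν_{α,−1}(3, −H, −H²/2) in the sense that the tilt slopes at β = −1 agree; this forces y > 0. Suppose moreover the Bogomolov inequality Δ = (xH³)² − 2(rH³)(yH³) ≥ 0 holds with H³ = 3, forcing y ≤ 1/(2r). Then y = 1/6 and r ∈ {2, 3}. -/
/-- Arithmetic core of "no walls along β = −1" for ch = (3, −H, −H²/2) on a cubic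
threefold: a destabilizer has twisted Chern character ch^{−1} = (r, H, yH²) with r ≥ 2
and y ∈ (1/6)ℤ.  The tilt slopes at β = −1 are ν(r,1,y) = y − α²r/2 and
ν(3, 2, 0) = −3α²/4 (since ch^{−1}(E) = (3, 2H, 0)); if they agree for some α > 0
and the Bogomolov inequality (1·H³)² − 2(rH³)(yH³) ≥ 0 holds with H³ = 3
(i.e. 9 − 18ry ≥ 0), then y = 1/6 and r ∈ {2, 3}. -/
theorem stmt_6 (r : ℤ) (hr : 2 ≤ r) (y : ℝ)
    (hy : ∃ k : ℤ, y = (k : ℝ) / 6)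
    (hwall : ∃ α : ℝ, 0 < α ∧ y - α ^ 2 * (r : ℝ) / 2 = -(3 * α ^ 2 / 4))
    (hbog : (1 * 3 : ℝ) ^ 2 - 2 * ((r : ℝ) * 3) * (y * 3) ≥ 0) :
    y = 1/6 ∧ (r = 2 ∨ r = 3) := by
  obtain ⟨k, hk⟩ := hy
  obtain ⟨α, hα, hwall⟩ := hwall
  have hr' : (2 : ℝ) ≤ (r : ℝ) := by exact_mod_cast hr
  have hypos : 0 < y := by nlinarith [sq_nonneg α]
  have hkpos : 0 < k := by
    by_contra h
    push_neg at h
    have : (k : ℝ) ≤ 0 := by exact_mod_cast h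
    nlinarith
  have hk1 : (1 : ℝ) ≤ (k : ℝ) := by exact_mod_cast hkpos
  have hrk : (r : ℝ) * (k : ℝ) ≤ 3 := by nlinarith
  have hkeq : k = 1 := by
    have h2 : (k : ℝ) < 2 := by nlinarith
    have : k < 2 := by exact_mod_cast h2
    omega
  have hyeq : y = 1/6 := by rw [hk, hkeq]; norm_num
  refine ⟨hyeq, ?_⟩
  have hr3 : (r : ℝ) ≤ 3 := by
    rw [hkeq] at hrk; push_cast at hrk; linarith
  have : r ≤ 3 := by exact_mod_cast hr3
  omega
end
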